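/- Fix constants 0 < a < b < c and c₁, ν > 0. There exists d₀ > 0 such that for every d ≥ d₀ and every s > 0, the function f(t) = s·exp(-d/t) satisfies f''(t) - f'(t)·c₁/(c-t) - f(t)·ν/(c-t)² ≥ 0 for all t ∈ (0, b], and moreover f''(t) - f'(t)·c₁/(c-t) - f(t)·ν/(c-t)² ≥ s·exp(-d/a) for all t ∈ (a, b]. -/

import Mathlib

set_option maxHeartbeats 1000000

lemma diff_deriv1 (d s t : ℝ) (ht : t ≠ 0) :
    HasDerivAt (fun t : ℝ => s * Real.exp (-d / t)) (s * Real.exp (-d / t) * (d / t ^ 2)) t := by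
  have h1 : HasDerivAt (fun u : ℝ => -d / u) (d / t ^ 2) t := by
    simp only [div_eq_mul_inv]
    have := (hasDerivAt_inv ht).const_mul (-d)
    exact this.congr_deriv (by field_simp)
  have h2 := (h1.exp).const_mul s
  exact h2.congr_deriv (by ring)

lemma diff_deriv1' (d s t : ℝ) (ht : t ≠ 0) :
    deriv (fun t : ℝ => s * Real.exp (-d / t)) t = s * Real.exp (-d / t) * (d / t ^ 2) :=
  (diff_deriv1 d s t ht).deriv

lemma diff_deriv2 (d s t : ℝ) (ht : t ≠ 0) :
    deriv (deriv (fun t : ℝ => s * Real.exp (-d / t))) t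
      = s * Real.exp (-d / t) * (d ^ 2 / t ^ 4 - 2 * d / t ^ 3) := by
  have he : deriv (fun t : ℝ => s * Real.exp (-d / t))
      =ᶠ[nhds t] fun u => s * Real.exp (-d / u) * (d / u ^ 2) := by
    filter_upwards [eventually_ne_nhds ht] with u hu
    exact diff_deriv1' d s u hu
  rw [Filter.EventuallyEq.deriv_eq he]
  have h1 : HasDerivAt (fun u : ℝ => s * Real.exp (-d / u)) (s * Real.exp (-d / t) * (d / t ^ 2)) t :=
    diff_deriv1 d s t ht
  have h2 : HasDerivAt (fun u : ℝ => d / u ^ 2) (-2 * d / t ^ 3) t := by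
    simp only [div_eq_mul_inv]
    have := ((hasDerivAt_pow 2 t).inv (pow_ne_zero 2 ht)).const_mul d
    refine this.congr_deriv ?_
    field_simp
    ring
  rw [(h1.fun_mul h2).deriv]
  field_simp
  ring

-- Polynomial core inequality
lemma diff_core (b c c₁ ν d t : ℝ) (hbc : b < c) (hc₁ : 0 < c₁) (hν : 0 < ν)
    (ht0 : 0 < t) (htb : t ≤ b)
    (hd1 : 1 ≤ d) (hd2 : 8 * b ≤ d) (hd3 : 2 * b ^ 2 ≤ d)
    (hd4 : 4 * c₁ * b ^ 2 ≤ d * (c - b)) (hd5 : 4 * ν * b ^ 4 ≤ d * (c - b) ^ 2) :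
    2 * d * t * (c - t) ^ 2 + d * c₁ * t ^ 2 * (c - t) + ν * t ^ 4 + t ^ 4 * (c - t) ^ 2
      ≤ d ^ 2 * (c - t) ^ 2 := by
  have hcb : 0 < c - b := by linarith
  have hct : 0 < c - t := by linarith
  have hcbt : c - b ≤ c - t := by linarith
  have hb : 0 < b := lt_of_lt_of_le ht0 htb
  have hd0 : (0:ℝ) ≤ d := by linarith
  have hsq : (c - b) ^ 2 ≤ (c - t) ^ 2 := by nlinarith
  have ht2 : t ^ 2 ≤ b ^ 2 := pow_le_pow_left₀ ht0.le htb 2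
  have ht4 : t ^ 4 ≤ b ^ 4 := pow_le_pow_left₀ ht0.le htb 4
  have A1 : 2 * d * t * (c - t) ^ 2 ≤ (d ^ 2 / 4) * (c - t) ^ 2 := by
    have h8 : 8 * t ≤ d := by linarith
    have h : 2 * d * t ≤ d ^ 2 / 4 := by nlinarith [mul_le_mul_of_nonneg_left h8 hd0]
    nlinarith [sq_nonneg (c - t)]
  have A2 : d * c₁ * t ^ 2 * (c - t) ≤ (d ^ 2 / 4) * (c - t) ^ 2 := by
    have h1 : 4 * c₁ * t ^ 2 ≤ d * (c - t) := by
      have ha1 : 4 * c₁ * t ^ 2 ≤ 4 * c₁ * b ^ 2 := by nlinarith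
      have ha2 : d * (c - b) ≤ d * (c - t) := mul_le_mul_of_nonneg_left hcbt hd0
      linarith
    have h2 : (0:ℝ) ≤ d * (c - t) := by positivity
    nlinarith [mul_le_mul_of_nonneg_left h1 h2]
  have A3 : ν * t ^ 4 ≤ (d ^ 2 / 4) * (c - t) ^ 2 := by
    have h1 : ν * t ^ 4 ≤ ν * b ^ 4 := by nlinarith
    have h2 : d * (c - b) ^ 2 ≤ d ^ 2 * (c - b) ^ 2 := by
      nlinarith [mul_nonneg hd0 (sq_nonneg (c - b)), sq_nonneg (c - b)]
    have h3 : d ^ 2 * (c - b) ^ 2 ≤ d ^ 2 * (c - t) ^ 2 :=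
      mul_le_mul_of_nonneg_left hsq (sq_nonneg d)
    linarith
  have A4 : t ^ 4 * (c - t) ^ 2 ≤ (d ^ 2 / 4) * (c - t) ^ 2 := by
    have h1 : (2 * b ^ 2) ^ 2 ≤ d ^ 2 := pow_le_pow_left₀ (by positivity) hd3 2
    have h2 : 4 * t ^ 4 ≤ d ^ 2 := by nlinarith
    have h3 : t ^ 4 ≤ d ^ 2 / 4 := by linarith
    exact mul_le_mul_of_nonneg_right h3 (sq_nonneg (c - t))
  linarith

theorem diffusion_inequality (a b c c₁ ν : ℝ) (ha : 0 < a) (hab : a < b) (hbc : b < c)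
    (hc₁ : 0 < c₁) (hν : 0 < ν) :
    ∃ d₀ > 0, ∀ d ≥ d₀, ∀ s > 0,
      (∀ t ∈ Set.Ioc (0 : ℝ) b,
        deriv (deriv (fun t : ℝ => s * Real.exp (-d / t))) t
          - deriv (fun t : ℝ => s * Real.exp (-d / t)) t * c₁ / (c - t)
          - (s * Real.exp (-d / t)) * ν / (c - t) ^ 2 ≥ 0) ∧
      (∀ t ∈ Set.Ioc a b,
        deriv (deriv (fun t : ℝ => s * Real.exp (-d / t))) t
          - deriv (fun t : ℝ => s * Real.exp (-d / t)) t * c₁ / (c - t)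
          - (s * Real.exp (-d / t)) * ν / (c - t) ^ 2 ≥ s * Real.exp (-d / a)) := by
  have hb : 0 < b := lt_trans ha hab
  have hcb : 0 < c - b := by linarith
  refine ⟨1 + 8 * b + 2 * b ^ 2 + 4 * c₁ * b ^ 2 / (c - b) + 4 * ν * b ^ 4 / (c - b) ^ 2,
    by positivity, fun d hd s hs => ?_⟩
  have hpos : (0:ℝ) ≤ 4 * c₁ * b ^ 2 / (c - b) := by positivity
  have hpos2 : (0:ℝ) ≤ 4 * ν * b ^ 4 / (c - b) ^ 2 := by positivity
  have hd1 : 1 ≤ d := by nlinarith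
  have hd2 : 8 * b ≤ d := by nlinarith
  have hd3 : 2 * b ^ 2 ≤ d := by nlinarith
  have hd4 : 4 * c₁ * b ^ 2 ≤ d * (c - b) := by
    have : 4 * c₁ * b ^ 2 / (c - b) ≤ d := by nlinarith
    calc 4 * c₁ * b ^ 2 = (4 * c₁ * b ^ 2 / (c - b)) * (c - b) := by field_simp
      _ ≤ d * (c - b) := by nlinarith
  have hd5 : 4 * ν * b ^ 4 ≤ d * (c - b) ^ 2 := by
    have : 4 * ν * b ^ 4 / (c - b) ^ 2 ≤ d := by nlinarith
    calc 4 * ν * b ^ 4 = (4 * ν * b ^ 4 / (c - b) ^ 2) * (c - b) ^ 2 := by field_simp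
      _ ≤ d * (c - b) ^ 2 := by nlinarith [sq_nonneg (c - b)]
  -- key : for t ∈ (0, b], expression ≥ s * exp (-d/t)
  have key : ∀ t ∈ Set.Ioc (0:ℝ) b,
      deriv (deriv (fun t : ℝ => s * Real.exp (-d / t))) t
        - deriv (fun t : ℝ => s * Real.exp (-d / t)) t * c₁ / (c - t)
        - (s * Real.exp (-d / t)) * ν / (c - t) ^ 2 ≥ s * Real.exp (-d / t) := by
    rintro t ⟨ht0, htb⟩
    have htne : t ≠ 0 := ne_of_gt ht0
    have hct : 0 < c - t := by linarith
    rw [diff_deriv2 d s t htne, diff_deriv1' d s t htne]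
    have hE : s * Real.exp (-d / t) * (d ^ 2 / t ^ 4 - 2 * d / t ^ 3)
        - s * Real.exp (-d / t) * (d / t ^ 2) * c₁ / (c - t)
        - s * Real.exp (-d / t) * ν / (c - t) ^ 2
        = s * Real.exp (-d / t) *
          ((d ^ 2 * (c - t) ^ 2 - 2 * d * t * (c - t) ^ 2 - d * c₁ * t ^ 2 * (c - t) - ν * t ^ 4)
            / (t ^ 4 * (c - t) ^ 2)) := by
      field_simp
    rw [hE]
    have hse : 0 < s * Real.exp (-d / t) := by positivity
    have hden : 0 < t ^ 4 * (c - t) ^ 2 := by positivity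
    have hnum : (1:ℝ) ≤ (d ^ 2 * (c - t) ^ 2 - 2 * d * t * (c - t) ^ 2
        - d * c₁ * t ^ 2 * (c - t) - ν * t ^ 4) / (t ^ 4 * (c - t) ^ 2) := by
      rw [le_div_iff₀ hden]
      have := diff_core b c c₁ ν d t hbc hc₁ hν ht0 htb hd1 hd2 hd3 hd4 hd5
      linarith
    calc s * Real.exp (-d / t) = s * Real.exp (-d / t) * 1 := (mul_one _).symm
      _ ≤ _ := by exact mul_le_mul_of_nonneg_left hnum hse.le
  constructor
  · intro t ht
    have h := key t ht
    have : (0:ℝ) < s * Real.exp (-d / t) := by positivity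
    linarith
  · rintro t ⟨hta, htb⟩
    have h := key t ⟨lt_trans ha hta, htb⟩
    have hexp : Real.exp (-d / a) ≤ Real.exp (-d / t) := by
      apply Real.exp_le_exp.mpr
      rw [neg_div, neg_div, neg_le_neg_iff]
      apply div_le_div_of_nonneg_left (by linarith) ha (le_of_lt hta)
    nlinarith [Real.exp_pos (-d / t)]
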